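/- arXiv:0906.4183 — 2 statements merged into one kernel-verified Lean document; each statement's English description precedes it below -/
import Mathlib

section
/- Let R be a commutative ring and π : G → H an epimorphism of R-modules such that H is nonzero and R-torsion-free (r·h = 0 with 0 ≠ r ∈ R and h ∈ H implies h = 0), and suppose the canonical ring homomorphism R → End_R(G) is bijective. Then Hom_R(G, Ker(π)) = 0; consequently the map π_* : Hom_R(G,G) → Hom_R(G,H), φ ↦ π ∘ φ, is injective. -/
/-- Let `R` be a commutative ring and `π : G → H` an epimorphism of `R`-modules
such that `H` is nonzero and `R`-torsion-free, and suppose the canonical ring homomorphism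
`R → End_R(G)` is bijective.  Then `Hom_R(G, Ker(π)) = 0`; consequently the map
`π_* : Hom_R(G,G) → Hom_R(G,H)`, `φ ↦ π ∘ φ`, is injective. -/
theorem stmt3 {R : Type*} [CommRing R] {G H : Type*} [AddCommGroup G] [AddCommGroup H]
    [Module R G] [Module R H] (π : G →ₗ[R] H)
    (hsurj : Function.Surjective π) (hne : Nontrivial H)
    (htf : ∀ (r : R) (h : H), r • h = 0 → r ≠ 0 → h = 0)
    (hrigid : Function.Bijective fun r : R => (r • LinearMap.id : G →ₗ[R] G)) :
    (∀ f : G →ₗ[R] (LinearMap.ker π), f = 0) ∧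
    Function.Injective fun φ : G →ₗ[R] G => π.comp φ := by
  have key : ∀ g : G →ₗ[R] G, π.comp g = 0 → g = 0 := by
    intro g hg
    obtain ⟨r, hr⟩ := hrigid.2 g
    obtain ⟨h, hh⟩ := exists_ne (0 : H)
    have hrz : r = 0 := by
      by_contra hr0
      apply hh
      obtain ⟨x, hx⟩ := hsurj h
      refine htf r h ?_ hr0
      have hgx : g x = r • x := by rw [← hr]; simp
      calc r • h = r • π x := by rw [hx]
        _ = π (g x) := by rw [hgx, map_smul]
        _ = 0 := LinearMap.congr_fun hg x
    rw [← hr, hrz]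
    simp
  constructor
  · intro f
    have h0 : π.comp ((LinearMap.ker π).subtype.comp f) = 0 := by
      ext x; exact (f x).2
    have h1 := key _ h0
    ext x
    have h2 := LinearMap.congr_fun h1 x
    simp only [LinearMap.comp_apply, Submodule.subtype_apply, LinearMap.zero_apply] at h2 ⊢
    simp only [ZeroMemClass.coe_zero]
    exact h2
  · intro φ ψ hφψ
    have h2 : π.comp (φ - ψ) = 0 := by
      simp only at hφψ
      rw [LinearMap.comp_sub, hφψ, sub_self]
    exact sub_eq_zero.mp (key _ h2)
end

section
/- Let p be a prime and let w, w' ∈ ℤ_p be p-adic integers that are algebraically independent over ℤ. In ℤ_p ⊕ ℤ_p (the p-adic completion of the free abelian group ℤe ⊕ ℤf), let G = {x ∈ ℤ_p ⊕ ℤ_p : p^n x ∈ ℤ·(1,0) + ℤ·(0,1) + ℤ·(w·w', w) for some n ∈ ℕ} (the p-pure closure of the subgroup generated by e = (1,0), f = (0,1) and w(w'e + f) = (ww', w)), and let K = ℤ·(1,0). Then Hom(G, K) = 0 and every group homomorphism G → G/K is an integer multiple of the canonical projection π : G → G/K; in particular, 0 → K → G → G/K → 0 is a cellular exact sequence of abelian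 groups whose kernel K is infinite cyclic, with G of rank 3 and G/K of rank 2. -/
open TensorProduct

/-- A homomorphism of abelian groups `π : G → H` is a *cellular cover* over `H` if the induced
map `π_* : Hom(G,G) → Hom(G,H)`, `φ ↦ π ∘ φ`, is bijective. -/
def IsCellularCoverAb {G H : Type*} [AddCommGroup G] [AddCommGroup H] (π : G →+ H) : Prop :=
  Function.Bijective fun φ : G →+ G => π.comp φ

/-- The group `G = ⟨e, f, w(w'e + f)⟩_* ⊆ ℤ_p ⊕ ℤ_p`: all `x` with
`p^n x ∈ ℤ·(1,0) + ℤ·(0,1) + ℤ·(w·w', w)` for some `n`. -/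
def bigG (p : ℕ) [Fact p.Prime] (w w' : ℤ_[p]) : Submodule ℤ (ℤ_[p] × ℤ_[p]) where
  carrier := {x | ∃ n : ℕ, (p ^ n : ℤ) • x ∈ Submodule.span ℤ
      ({(1, 0), (0, 1), (w * w', w)} : Set (ℤ_[p] × ℤ_[p]))}
  zero_mem' := ⟨0, by simp⟩
  add_mem' := by
    rintro x y ⟨n, hn⟩ ⟨m, hm⟩
    refine ⟨n + m, ?_⟩
    have h : (p ^ (n + m) : ℤ) • (x + y)
        = (p ^ m : ℤ) • ((p ^ n : ℤ) • x) + (p ^ n : ℤ) • ((p ^ m : ℤ) • y) := by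
      rw [smul_add, ← mul_smul, ← mul_smul, ← pow_add, ← pow_add, Nat.add_comm m n]
    rw [h]
    exact Submodule.add_mem _ (Submodule.smul_mem _ _ hn) (Submodule.smul_mem _ _ hm)
  smul_mem' := by
    rintro c x ⟨n, hn⟩
    refine ⟨n, ?_⟩
    rw [smul_comm]
    exact Submodule.smul_mem _ _ hn

/-!
Since `G` is `p`-pure in `ℤ_p²`, for integer approximations `a, b` of the coordinates of `x ∈ G`
modulo `p ^ n` the element `x - a e - b f` lies in `p ^ n G`. Hence every additive map
`F : G → ℤ_p` is `x ↦ x₁ F e + x₂ F f`, and in particular `F g = w w' F e + w F f` for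
`g = (w w', w)`. If `F` is integer-valued, algebraic independence of `w, w'` forces `F = 0`; this
gives `Hom(G, K) = 0`. The second coordinate embeds `G/K` into `ℤ_p`, with image inside the
`p`-pure closure of `ℤ + ℤ w`, and comparing the coefficients of `1, w, w², w w', w² w'` shows
that a map `G → G/K` kills `e` and sends `f` to an integer multiple of itself. Cellularity is a
formal consequence of the two `Hom` computations, and the ranks follow from the independence of
`e, f, g` together with `G / ⟨e, f, g⟩` being torsion.
-/

theorem isCellularCoverAb_mkQ {M : Type*} [AddCommGroup M] (N : Submodule ℤ M)
    (hN : ∀ f : M →+ N, f = 0) (hQ : ∀ f : M →+ M ⧸ N, ∃ n : ℤ, f = n • N.mkQ.toAddMonoidHom) :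
    IsCellularCoverAb N.mkQ.toAddMonoidHom := by
  refine ⟨fun φ₁ φ₂ h => ?_, fun ψ => ?_⟩
  · have hmem (x : M) : φ₁ x - φ₂ x ∈ N := by
      rw [← Submodule.Quotient.mk_eq_zero, Submodule.Quotient.mk_sub, sub_eq_zero]
      exact DFunLike.congr_fun h x
    have h0 := hN ((φ₁ - φ₂).codRestrict N hmem)
    ext x
    exact sub_eq_zero.mp (congrArg Subtype.val (DFunLike.congr_fun h0 x))
  · obtain ⟨n, rfl⟩ := hQ ψ
    exact ⟨n • AddMonoidHom.id M, by ext; simp⟩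

theorem rank_rat_tensorProduct_eq (M : Type*) [AddCommGroup M] :
    Module.rank ℚ (ℚ ⊗[ℤ] M) = Module.rank ℤ M :=
  (TensorProduct.isBaseChange ℤ M ℚ).rank_eq

theorem Submodule.rank_eq_of_exists_smul_mem {R M : Type*} [CommRing R] [IsDomain R]
    [AddCommGroup M] [Module R M] (S : Submodule R M) (h : ∀ x, ∃ a : R, a ≠ 0 ∧ a • x ∈ S) :
    Module.rank R S = Module.rank R M := by
  have hQ : Module.rank R (M ⧸ S) = 0 := by
    refine rank_eq_zero_iff.mpr fun y => ?_
    obtain ⟨x, rfl⟩ := S.mkQ_surjective y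
    obtain ⟨a, ha, hx⟩ := h x
    exact ⟨a, ha, (Submodule.Quotient.mk_eq_zero S).mpr hx⟩
  rw [← rank_quotient_add_rank_of_isDomain S, hQ, zero_add]

theorem mem_span_one_zero_iff {R : Type*} [Ring R] {x : R × R} :
    x ∈ ℤ ∙ ((1 : R), (0 : R)) ↔ ∃ m : ℤ, ((m : R), (0 : R)) = x := by
  simp [Submodule.mem_span_singleton]

open MvPolynomial in
theorem AlgebraicIndependent.int_coeffs_eq_zero {A : Type*} [CommRing A] {x y : A}
    (hxy : AlgebraicIndependent ℤ ![x, y]) {c₀ c₁ c₂ c₃ c₄ : ℤ}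
    (h : (c₀ : A) + c₁ * x + c₂ * x ^ 2 + c₃ * (x * y) + c₄ * (x ^ 2 * y) = 0) :
    c₀ = 0 ∧ c₁ = 0 ∧ c₂ = 0 ∧ c₃ = 0 ∧ c₄ = 0 := by
  have hP : (C c₀ + C c₁ * X 0 + C c₂ * X 0 ^ 2 + C c₃ * (X 0 * X 1)
      + C c₄ * (X 0 ^ 2 * X 1) : MvPolynomial (Fin 2) ℤ) = 0 := by
    apply hxy
    simpa [algebraMap_int_eq, eq_intCast] using h
  simp only [X, C_apply, pow_two, monomial_mul, mul_one] at hP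
  have h0 := congrArg (coeff 0) hP
  have h1 := congrArg (coeff (Finsupp.single 0 1)) hP
  have h2 := congrArg (coeff (Finsupp.single 0 1 + Finsupp.single 0 1)) hP
  have h3 := congrArg (coeff (Finsupp.single 0 1 + Finsupp.single 1 1)) hP
  have h4 := congrArg (coeff (Finsupp.single 0 1 + Finsupp.single 0 1 + Finsupp.single 1 1)) hP
  simp only [coeff_add, coeff_monomial, coeff_zero] at h0 h1 h2 h3 h4
  norm_num [Finsupp.ext_iff, Finsupp.single_apply, Fin.forall_fin_two] at h0 h1 h2 h3 h4
  exact ⟨h0, h1, h2, h3, h4⟩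

namespace PadicInt

variable {p : ℕ} [Fact p.Prime]

theorem eq_zero_of_forall_pow_dvd {z : ℤ_[p]} (h : ∀ n : ℕ, (p : ℤ_[p]) ^ n ∣ z) : z = 0 := by
  have hI : Ideal.span {(p : ℤ_[p])} ≠ ⊤ := by
    rw [Ne, Ideal.span_singleton_eq_top]
    exact prime_p.not_isUnit
  rw [← Ideal.mem_bot, ← Ideal.iInf_pow_eq_bot_of_isDomain _ hI, Ideal.mem_iInf]
  intro n
  rw [Ideal.span_singleton_pow, Ideal.mem_span_singleton]
  exact h n

theorem exists_int_eq_of_pow_mul_eq_int {z : ℤ_[p]} {n : ℕ} {a : ℤ}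
    (h : (p : ℤ_[p]) ^ n * z = a) : ∃ m : ℤ, z = m := by
  obtain ⟨m, rfl⟩ := (pow_p_dvd_int_iff n a).mp ⟨z, h.symm⟩
  refine ⟨m, mul_left_cancel₀ (pow_ne_zero n ?_) (h.trans (by push_cast; rfl))⟩
  exact_mod_cast (Fact.out : p.Prime).ne_zero

theorem addMonoidHom_apply_of_pure {G : Submodule ℤ (ℤ_[p] × ℤ_[p])}
    (he : ((1 : ℤ_[p]), (0 : ℤ_[p])) ∈ G) (hf : ((0 : ℤ_[p]), (1 : ℤ_[p])) ∈ G)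
    (hpure : ∀ (n : ℕ) (y : ℤ_[p] × ℤ_[p]), (p ^ n : ℤ) • y ∈ G → y ∈ G)
    (F : G →+ ℤ_[p]) (x : G) :
    F x = (x : ℤ_[p] × ℤ_[p]).1 * F ⟨_, he⟩ + (x : ℤ_[p] × ℤ_[p]).2 * F ⟨_, hf⟩ := by
  refine sub_eq_zero.mp (eq_zero_of_forall_pow_dvd fun n => ?_)
  obtain ⟨s, hs⟩ := Ideal.mem_span_singleton.mp (appr_spec n (x : ℤ_[p] × ℤ_[p]).1)
  obtain ⟨t, ht⟩ := Ideal.mem_span_singleton.mp (appr_spec n (x : ℤ_[p] × ℤ_[p]).2)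
  set a : ℕ := (x : ℤ_[p] × ℤ_[p]).1.appr n
  set b : ℕ := (x : ℤ_[p] × ℤ_[p]).2.appr n
  set e : G := ⟨_, he⟩
  set f : G := ⟨_, hf⟩
  have hst : (p ^ n : ℤ) • (s, t) = (x : ℤ_[p] × ℤ_[p]) - (a : ℤ) • (1, 0) - (b : ℤ) • (0, 1) := by
    ext
    · simp [zsmul_eq_mul]; linear_combination -hs
    · simp [zsmul_eq_mul]; linear_combination -ht
  set y : G := ⟨(s, t), hpure n _ (hst ▸ sub_mem (sub_mem x.2 (G.smul_mem _ he)) (G.smul_mem _ hf))⟩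
  have hx : x = (a : ℤ) • e + (b : ℤ) • f + (p ^ n : ℤ) • y := by
    ext1
    simp only [Submodule.coe_add, Submodule.coe_smul, y, hst]
    abel
  have hFx : F x = a * F e + b * F f + p ^ n * F y := by
    rw [hx]
    simp [zsmul_eq_mul]
  refine ⟨F y - s * F e - t * F f, ?_⟩
  rw [hFx]
  linear_combination (-F e) * hs - F f * ht

end PadicInt

namespace bigG

variable {p : ℕ} [Fact p.Prime] {w w' : ℤ_[p]}

theorem span_generators_le :
    Submodule.span ℤ {(1, 0), (0, 1), (w * w', w)} ≤ bigG p w w' :=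
  fun x hx => ⟨0, by simpa using hx⟩

theorem mem_of_pow_smul_mem {n : ℕ} {y : ℤ_[p] × ℤ_[p]} (h : (p ^ n : ℤ) • y ∈ bigG p w w') :
    y ∈ bigG p w w' := by
  obtain ⟨m, hm⟩ := h
  exact ⟨m + n, by rwa [pow_add, mul_smul]⟩

variable (p w w') in
noncomputable def e : bigG p w w' := ⟨(1, 0), span_generators_le (Submodule.subset_span (by simp))⟩

variable (p w w') in
noncomputable def f : bigG p w w' := ⟨(0, 1), span_generators_le (Submodule.subset_span (by simp))⟩

variable (p w w') in
noncomputable def g : bigG p w w' :=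
  ⟨(w * w', w), span_generators_le (Submodule.subset_span (by simp))⟩

theorem exists_pow_smul_eq (x : bigG p w w') : ∃ (n : ℕ) (a b c : ℤ),
    (p ^ n : ℤ) • x = a • e p w w' + b • f p w w' + c • g p w w' := by
  obtain ⟨n, hn⟩ := x.2
  rw [Submodule.mem_span_insert] at hn
  obtain ⟨a, z, hz, hn⟩ := hn
  rw [Submodule.mem_span_insert] at hz
  obtain ⟨b, z', hz', rfl⟩ := hz
  obtain ⟨c, rfl⟩ := Submodule.mem_span_singleton.mp hz'
  exact ⟨n, a, b, c, Subtype.ext (hn.trans (by simp [e, f, g]))⟩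

theorem exists_pow_mul_fst_snd_eq (x : bigG p w w') : ∃ (n : ℕ) (a b c : ℤ),
    (p : ℤ_[p]) ^ n * (x : ℤ_[p] × ℤ_[p]).1 = a + c * (w * w') ∧
      (p : ℤ_[p]) ^ n * (x : ℤ_[p] × ℤ_[p]).2 = b + c * w := by
  obtain ⟨n, a, b, c, h⟩ := exists_pow_smul_eq x
  refine ⟨n, a, b, c, ?_⟩
  have h' := congrArg Subtype.val h
  simp only [e, f, g, Submodule.coe_add, Submodule.coe_smul, Prod.ext_iff] at h'
  simpa [zsmul_eq_mul] using h'

theorem addMonoidHom_apply (F : bigG p w w' →+ ℤ_[p]) (x : bigG p w w') :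
    F x = (x : ℤ_[p] × ℤ_[p]).1 * F (e p w w') + (x : ℤ_[p] × ℤ_[p]).2 * F (f p w w') :=
  PadicInt.addMonoidHom_apply_of_pure (e p w w').2 (f p w w').2
    (fun _ _ => mem_of_pow_smul_mem) F x

theorem map_g (F : bigG p w w' →+ ℤ_[p]) :
    F (g p w w') = w * w' * F (e p w w') + w * F (f p w w') :=
  addMonoidHom_apply F _

theorem eq_zero_of_forall_exists_int (hind : AlgebraicIndependent ℤ ![w, w'])
    (F : bigG p w w' →+ ℤ_[p]) (hF : ∀ x, ∃ m : ℤ, F x = m) : F = 0 := by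
  obtain ⟨m₁, h₁⟩ := hF (e p w w')
  obtain ⟨m₂, h₂⟩ := hF (f p w w')
  obtain ⟨m₃, h₃⟩ := hF (g p w w')
  have hg := map_g F
  rw [h₁, h₂, h₃] at hg
  obtain ⟨-, hm₂, -, hm₁, -⟩ := hind.int_coeffs_eq_zero (c₀ := m₃) (c₁ := -m₂) (c₂ := 0)
    (c₃ := -m₁) (c₄ := 0) (by push_cast; linear_combination hg)
  ext x
  rw [addMonoidHom_apply, h₁, h₂, neg_eq_zero.mp hm₁, neg_eq_zero.mp hm₂]
  simp

variable (p) in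
noncomputable abbrev K : Submodule ℤ (ℤ_[p] × ℤ_[p]) := ℤ ∙ (1, 0)

variable (p w w') in
noncomputable abbrev Kin : Submodule ℤ (bigG p w w') := (K p).comap (bigG p w w').subtype

theorem K_le : K p ≤ bigG p w w' :=
  Submodule.span_le.mpr (Set.singleton_subset_iff.mpr (e p w w').2)

theorem addMonoidHom_to_K_eq_zero (hind : AlgebraicIndependent ℤ ![w, w'])
    (φ : bigG p w w' →+ K p) : φ = 0 := by
  have hfst := eq_zero_of_forall_exists_int hind
    ((AddMonoidHom.fst ℤ_[p] ℤ_[p]).comp ((K p).subtype.toAddMonoidHom.comp φ)) fun x => by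
      obtain ⟨m, hm⟩ := mem_span_one_zero_iff.mp (φ x).2
      exact ⟨m, by simp [← hm]⟩
  refine AddMonoidHom.ext fun x => Subtype.ext (Prod.ext (DFunLike.congr_fun hfst x) ?_)
  obtain ⟨m, hm⟩ := mem_span_one_zero_iff.mp (φ x).2
  simp [← hm]

theorem addMonoidHom_to_Kin_eq_zero (hind : AlgebraicIndependent ℤ ![w, w'])
    (φ : bigG p w w' →+ Kin p w w') : φ = 0 := by
  have h := addMonoidHom_to_K_eq_zero hind
    ((Submodule.comapSubtypeEquivOfLe K_le).toAddEquiv.toAddMonoidHom.comp φ)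
  ext x : 1
  simpa using DFunLike.congr_fun h x

theorem mem_Kin_of_snd_eq_zero (hind : AlgebraicIndependent ℤ ![w, w']) {x : bigG p w w'}
    (hx : (x : ℤ_[p] × ℤ_[p]).2 = 0) : x ∈ Kin p w w' := by
  obtain ⟨n, a, b, c, h₁, h₂⟩ := exists_pow_mul_fst_snd_eq x
  obtain ⟨hb, hc, -⟩ := hind.int_coeffs_eq_zero (c₀ := b) (c₁ := c) (c₂ := 0) (c₃ := 0) (c₄ := 0)
    (by rw [hx] at h₂; push_cast; linear_combination -h₂)
  obtain ⟨m, hm⟩ := PadicInt.exists_int_eq_of_pow_mul_eq_int (a := a)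
    (by rw [h₁, hc]; push_cast; ring)
  exact mem_span_one_zero_iff.mpr ⟨m, Prod.ext hm.symm hx.symm⟩

variable (p w w') in
noncomputable def sndQ : (bigG p w w' ⧸ Kin p w w') →ₗ[ℤ] ℤ_[p] :=
  (Kin p w w').liftQ ((LinearMap.snd ℤ ℤ_[p] ℤ_[p]).comp (bigG p w w').subtype) fun _ hx => by
    obtain ⟨m, hm⟩ := mem_span_one_zero_iff.mp hx
    exact LinearMap.mem_ker.mpr (congrArg Prod.snd hm).symm

@[simp]
theorem sndQ_mk (x : bigG p w w') :
    sndQ p w w' (Submodule.Quotient.mk x) = (x : ℤ_[p] × ℤ_[p]).2 :=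
  rfl

theorem sndQ_injective (hind : AlgebraicIndependent ℤ ![w, w']) :
    Function.Injective (sndQ p w w') := by
  rw [← LinearMap.ker_eq_bot]
  exact Submodule.ker_liftQ_eq_bot _ _ _ fun x hx => mem_Kin_of_snd_eq_zero hind hx

theorem exists_pow_mul_sndQ_eq (q : bigG p w w' ⧸ Kin p w w') :
    ∃ (n : ℕ) (b c : ℤ), (p : ℤ_[p]) ^ n * sndQ p w w' q = b + c * w := by
  obtain ⟨x, rfl⟩ := (Kin p w w').mkQ_surjective q
  obtain ⟨n, -, b, c, -, h⟩ := exists_pow_mul_fst_snd_eq x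
  exact ⟨n, b, c, h⟩

theorem exists_eq_int_mul_snd (hind : AlgebraicIndependent ℤ ![w, w'])
    (F : bigG p w w' →+ ℤ_[p])
    (hF : ∀ x, ∃ (n : ℕ) (b c : ℤ), (p : ℤ_[p]) ^ n * F x = b + c * w) :
    ∃ m : ℤ, ∀ x, F x = m * (x : ℤ_[p] × ℤ_[p]).2 := by
  obtain ⟨n₁, b₁, c₁, h₁⟩ := hF (e p w w')
  obtain ⟨n₂, b₂, c₂, h₂⟩ := hF (f p w w')
  obtain ⟨n₃, b₃, c₃, h₃⟩ := hF (g p w w')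
  have hp : ∀ k : ℕ, (p : ℤ) ^ k ≠ 0 :=
    fun k => pow_ne_zero _ (by exact_mod_cast (Fact.out : p.Prime).ne_zero)
  -- multiply `map_g F` by `p ^ (n₁ + n₂ + n₃)` and substitute `h₁`, `h₂`, `h₃`
  obtain ⟨-, -, hc₂, hb₁, hc₁⟩ := hind.int_coeffs_eq_zero
    (c₀ := p ^ (n₁ + n₂) * b₃) (c₁ := p ^ (n₁ + n₂) * c₃ - p ^ (n₁ + n₃) * b₂)
    (c₂ := -(p ^ (n₁ + n₃) * c₂)) (c₃ := -(p ^ (n₂ + n₃) * b₁)) (c₄ := -(p ^ (n₂ + n₃) * c₁)) (by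
      push_cast [pow_add]
      linear_combination (-(p : ℤ_[p]) ^ n₁ * p ^ n₂ * h₃ + w * w' * p ^ n₂ * p ^ n₃ * h₁
        + w * p ^ n₁ * p ^ n₃ * h₂ + p ^ n₁ * p ^ n₂ * p ^ n₃ * map_g F))
  simp only [neg_eq_zero, mul_eq_zero, hp, false_or] at hc₂ hb₁ hc₁
  have hFe : F (e p w w') = 0 := by
    simpa [hb₁, hc₁, (Fact.out : p.Prime).ne_zero] using h₁
  obtain ⟨m, hFf⟩ := PadicInt.exists_int_eq_of_pow_mul_eq_int (a := b₂) (by simpa [hc₂] using h₂)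
  exact ⟨m, fun x => by rw [addMonoidHom_apply, hFe, hFf]; ring⟩

theorem addMonoidHom_to_quotient_eq_zsmul (hind : AlgebraicIndependent ℤ ![w, w'])
    (φ : bigG p w w' →+ bigG p w w' ⧸ Kin p w w') :
    ∃ n : ℤ, φ = n • (Kin p w w').mkQ.toAddMonoidHom := by
  obtain ⟨m, hm⟩ := exists_eq_int_mul_snd hind ((sndQ p w w').toAddMonoidHom.comp φ)
    fun x => exists_pow_mul_sndQ_eq (φ x)
  refine ⟨m, AddMonoidHom.ext fun x => sndQ_injective hind ?_⟩
  simpa [zsmul_eq_mul] using hm x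

theorem linearIndependent_efg (hind : AlgebraicIndependent ℤ ![w, w']) :
    LinearIndependent ℤ ![e p w w', f p w w', g p w w'] := by
  refine Fintype.linearIndependent_iff.mpr fun c hc => ?_
  have h := congrArg Subtype.val hc
  simp [Fin.sum_univ_three, e, f, g, Prod.ext_iff] at h
  obtain ⟨h₀, -, -, h₂, -⟩ := hind.int_coeffs_eq_zero (c₀ := c 0) (c₁ := 0) (c₂ := 0) (c₃ := c 2)
    (c₄ := 0) (by push_cast; linear_combination h.1)
  obtain ⟨h₁, -⟩ := hind.int_coeffs_eq_zero (c₀ := c 1) (c₁ := c 2) (c₂ := 0) (c₃ := 0)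
    (c₄ := 0) (by push_cast; linear_combination h.2)
  intro i
  fin_cases i <;> assumption

theorem rank_eq_three (hind : AlgebraicIndependent ℤ ![w, w']) :
    Module.rank ℤ (bigG p w w') = 3 := by
  have hli := linearIndependent_efg hind
  rw [← Submodule.rank_eq_of_exists_smul_mem _ fun x => ?_, rank_span hli,
    Cardinal.mk_range_eq _ hli.injective, Cardinal.mk_fintype, Fintype.card_fin]
  · rfl
  obtain ⟨n, a, b, c, h⟩ := exists_pow_smul_eq x
  refine ⟨p ^ n, pow_ne_zero _ (by exact_mod_cast (Fact.out : p.Prime).ne_zero), h ▸ ?_⟩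
  have hv (i : Fin 3) := Submodule.subset_span (R := ℤ)
    (Set.mem_range_self (f := ![e p w w', f p w w', g p w w']) i)
  exact add_mem (add_mem (Submodule.smul_mem _ _ (hv 0)) (Submodule.smul_mem _ _ (hv 1)))
    (Submodule.smul_mem _ _ (hv 2))

variable (p) in
noncomputable def intEquivK : ℤ ≃ₗ[ℤ] K p :=
  LinearEquiv.toSpanNonzeroSingleton ℤ _ (1, 0) (by simp)

theorem rank_Kin : Module.rank ℤ (Kin p w w') = 1 := by
  rw [(Submodule.comapSubtypeEquivOfLe K_le).rank_eq, ← (intEquivK p).rank_eq, Module.rank_self]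

theorem rank_quotient_Kin (hind : AlgebraicIndependent ℤ ![w, w']) :
    Module.rank ℤ (bigG p w w' ⧸ Kin p w w') = 2 := by
  have h := rank_quotient_add_rank_of_isDomain (Kin p w w')
  rw [rank_eq_three hind, rank_Kin] at h
  exact Cardinal.eq_of_add_eq_add_right (h.trans (by norm_num)) Cardinal.one_lt_aleph0

end bigG

/-- For `w, w' ∈ ℤ_p` algebraically independent over `ℤ`, with
`G = ⟨(1,0), (0,1), (ww', w)⟩_*` and `K = ℤ·(1,0)`:  `Hom(G,K) = 0`, every group homomorphism
`G → G/K` is an integer multiple of the canonical projection `π`; in particular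
`0 → K → G → G/K → 0` is a cellular exact sequence of abelian groups, `K` is infinite cyclic,
`G` has rank `3` and `G/K` has rank `2`. -/
theorem stmt7 (p : ℕ) [Fact p.Prime] (w w' : ℤ_[p])
    (hind : AlgebraicIndependent ℤ ![w, w']) :
    ∀ (K : Submodule ℤ (ℤ_[p] × ℤ_[p])),
      K = Submodule.span ℤ ({((1 : ℤ_[p]), (0 : ℤ_[p]))} : Set (ℤ_[p] × ℤ_[p])) →
      ∀ (Kin : Submodule ℤ ↥(bigG p w w')), Kin = K.comap (bigG p w w').subtype →
      (∀ f : ↥(bigG p w w') →+ ↥K, f = 0) ∧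
      (∀ f : ↥(bigG p w w') →+ (↥(bigG p w w') ⧸ Kin),
          ∃ n : ℤ, f = n • Kin.mkQ.toAddMonoidHom) ∧
      Function.Surjective Kin.mkQ.toAddMonoidHom ∧
      IsCellularCoverAb Kin.mkQ.toAddMonoidHom ∧
      Nonempty (↥K ≃+ ℤ) ∧
      Module.rank ℚ (ℚ ⊗[ℤ] ↥(bigG p w w')) = 3 ∧
      Module.rank ℚ (ℚ ⊗[ℤ] (↥(bigG p w w') ⧸ Kin)) = 2 := by
  rintro K rfl Kin rfl
  have hQ := bigG.addMonoidHom_to_quotient_eq_zsmul hind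
  exact ⟨bigG.addMonoidHom_to_K_eq_zero hind, hQ, Submodule.mkQ_surjective _,
    isCellularCoverAb_mkQ _ (bigG.addMonoidHom_to_Kin_eq_zero hind) hQ,
    ⟨(bigG.intEquivK p).symm.toAddEquiv⟩,
    by rw [rank_rat_tensorProduct_eq, bigG.rank_eq_three hind],
    by rw [rank_rat_tensorProduct_eq, bigG.rank_quotient_Kin hind]⟩
end
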